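/- arXiv:gr-qc/0702111 — 2 statements merged into one kernel-verified Lean document; each statement's English description precedes it below -/
import Mathlib

section
/- The integral ∫₀^∞ q³/(e^q − 1) dq equals π⁴/15. -/
open Real MeasureTheory

open Complex in
lemma bose_hasSum_mellin :
    HasSum (fun n : ℕ ↦ Complex.Gamma 4 * 1 / (n + 1 : ℂ) ^ (4:ℂ))
      (mellin (fun t : ℝ ↦ (1 / (Real.exp t - 1) : ℂ)) 4) := by
  have hp : ∀ n : ℕ, (1 : ℂ) = 0 ∨ (0:ℝ) < (n : ℝ) + 1 := fun n ↦ Or.inr (by positivity)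
  have := hasSum_mellin (a := fun _ : ℕ ↦ (1:ℂ)) (p := fun n : ℕ ↦ (n:ℝ) + 1)
    (F := fun t : ℝ ↦ (1 / (Real.exp t - 1) : ℂ)) (s := 4) hp (by norm_num) ?_ ?_
  · convert this using 2 with n
    push_cast
    ring_nf
  · intro t ht
    simp only [Set.mem_Ioi] at ht
    have h1 : 1 < Real.exp t := by
      rw [← Real.exp_zero]; exact Real.exp_lt_exp.mpr ht
    have hr1 : Real.exp (-t) < 1 := Real.exp_lt_one_iff.mpr (by linarith)
    have hr0 : (0:ℝ) ≤ Real.exp (-t) := (Real.exp_pos _).le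
    have hgeo : HasSum (fun n : ℕ ↦ Real.exp (-t) ^ (n + 1))
        (Real.exp (-t) / (1 - Real.exp (-t))) := by
      have h := hasSum_geometric_of_lt_one hr0 hr1
      have h2 := h.mul_left (Real.exp (-t))
      simpa [pow_succ, mul_comm, div_eq_mul_inv, one_div] using h2
    have key : Real.exp (-t) / (1 - Real.exp (-t)) = 1 / (Real.exp t - 1) := by
      have hmul : Real.exp (-t) * Real.exp t = 1 := by
        rw [← Real.exp_add]; simp
      rw [div_eq_div_iff (by linarith : (0:ℝ) < 1 - Real.exp (-t)).ne'
        (by linarith : (0:ℝ) < Real.exp t - 1).ne']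
      linear_combination hmul
    rw [key] at hgeo
    have hofReal := Complex.hasSum_ofReal.mpr hgeo
    have hfun : (fun n : ℕ ↦ (1:ℂ) * ↑(rexp (-((n:ℝ)+1) * t)))
        = fun n : ℕ ↦ ((rexp (-t) ^ (n+1) : ℝ) : ℂ) := by
      ext n
      rw [one_mul, ← Real.exp_nat_mul]
      norm_cast
      congr 1
      push_cast
      ring
    have hval : ((1/(rexp t -1):ℝ):ℂ) = 1/((rexp t:ℂ)-1) := by push_cast; ring
    rw [hfun]
    show HasSum (fun n : ℕ ↦ ((rexp (-t) ^ (n+1) : ℝ) : ℂ)) (1/((rexp t:ℂ)-1))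
    rw [← hval]
    exact hofReal
  · simp only [norm_one]
    have h4 : ((4:ℂ).re) = (4:ℝ) := by norm_num
    simp_rw [h4]
    have hs : Summable (fun n : ℕ ↦ 1 / ((n:ℝ)) ^ (4:ℝ)) :=
      Real.summable_one_div_nat_rpow.mpr (by norm_num)
    have h2 := hs.comp_injective (add_left_injective 1)
    refine h2.congr (fun n ↦ ?_)
    simp only [Function.comp_apply]
    push_cast
    ring_nf

theorem bose_integral_zeta4 :
    ∫ q in Set.Ioi (0:ℝ), q ^ 3 / (Real.exp q - 1) = π ^ 4 / 15 := by
  have h := bose_hasSum_mellin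
  have hz := zeta_eq_tsum_one_div_nat_add_one_cpow (s := 4) (by norm_num)
  have hts := h.tsum_eq
  have hΓ : Complex.Gamma 4 = 6 := by
    rw [show (4:ℂ) = (3:ℕ) + 1 by norm_num, Complex.Gamma_nat_eq_factorial]
    norm_num [Nat.factorial]
  have hsum : ∑' n : ℕ, Complex.Gamma 4 * 1 / (n + 1 : ℂ) ^ (4:ℂ)
      = 6 * riemannZeta 4 := by
    rw [hz, ← tsum_mul_left]
    congr 1; ext n; rw [hΓ]; ring
  have hmel : mellin (fun t : ℝ ↦ (1 / (Real.exp t - 1) : ℂ)) 4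
      = 6 * riemannZeta 4 := by rw [← hts, hsum]
  rw [riemannZeta_four] at hmel
  have hre : mellin (fun t : ℝ ↦ (1 / (Real.exp t - 1) : ℂ)) 4
      = ((∫ q in Set.Ioi (0:ℝ), q ^ 3 / (Real.exp q - 1) : ℝ) : ℂ) := by
    rw [mellin]
    refine (setIntegral_congr_fun measurableSet_Ioi (fun t ht ↦ ?_)).trans integral_ofReal
    simp only [Set.mem_Ioi] at ht
    show (↑t:ℂ) ^ ((4:ℂ) - 1) • ((1 / ((rexp t:ℂ) - 1)) : ℂ) = ((t ^ 3 / (rexp t - 1) : ℝ) : ℂ)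
    rw [smul_eq_mul, show (4:ℂ) - 1 = ((3:ℕ):ℂ) by norm_num, Complex.cpow_natCast]
    push_cast
    ring
  rw [hre] at hmel
  have : ((∫ q in Set.Ioi (0:ℝ), q ^ 3 / (Real.exp q - 1) : ℝ) : ℂ)
      = ((π ^ 4 / 15 : ℝ) : ℂ) := by
    rw [hmel]; push_cast; ring
  exact_mod_cast this
end

section
/- For z ∈ {−1, 1} and a ≤ 0 (and a ∈ ℝ when z = 1), the Bose–Einstein/Fermi–Dirac integral ∫₀^∞ q³ (e^{q−a} + z)⁻¹ dq equals −6 z Li₄(−z e^a), where Li₄ is the polylogarithm of order 4. -/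
set_option maxHeartbeats 1000000

open Real MeasureTheory

lemma key_integrable {c : ℝ} (hc : 0 < c) :
    IntegrableOn (fun q : ℝ => q ^ 3 * Real.exp (-(c * q))) (Set.Ioi 0) := by
  have h := integrableOn_rpow_mul_exp_neg_mul_rpow (p := 1) (s := 3) (b := c)
    (by norm_num) zero_lt_one hc
  refine h.congr_fun (fun x hx => ?_) measurableSet_Ioi
  dsimp only
  rw [Real.rpow_one, show (3:ℝ) = ((3:ℕ):ℝ) by norm_num, Real.rpow_natCast, neg_mul]

lemma key_integral {c : ℝ} (hc : 0 < c) :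
    ∫ q in Set.Ioi (0:ℝ), q ^ 3 * Real.exp (-(c * q)) = 6 / c ^ 4 := by
  have h := Real.integral_rpow_mul_exp_neg_mul_Ioi (a := 4) (r := c) (by norm_num) hc
  calc ∫ q in Set.Ioi (0:ℝ), q ^ 3 * Real.exp (-(c * q))
      = ∫ t in Set.Ioi (0:ℝ), t ^ ((4:ℝ) - 1) * Real.exp (-(c * t)) := by
        refine setIntegral_congr_fun measurableSet_Ioi (fun x hx => ?_)
        rw [show (4:ℝ) - 1 = ((3:ℕ):ℝ) by norm_num, Real.rpow_natCast]
    _ = (1 / c) ^ (4:ℝ) * Real.Gamma 4 := h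
    _ = 6 / c ^ 4 := by
        rw [show (4:ℝ) = ((4:ℕ):ℝ) by norm_num, Real.rpow_natCast,
          show Real.Gamma ((4:ℕ):ℝ) = 6 by
            rw [show ((4:ℕ):ℝ) = ((3:ℕ):ℝ) + 1 by norm_num, Real.Gamma_nat_eq_factorial]
            simp [Nat.factorial]]
        field_simp

/-- Li₄ via its power series: Li₄(y) = ∑_{n ≥ 1} yⁿ/n⁴. -/
noncomputable def Li4 (y : ℝ) : ℝ := ∑' n : ℕ, y ^ (n + 1) / ((n : ℝ) + 1) ^ 4

theorem bose_fermi_integral_polylog (z a : ℝ) (hz : z = -1 ∨ z = 1) (ha : a ≤ 0) :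
    ∫ q in Set.Ioi (0:ℝ), q ^ 3 * (Real.exp (q - a) + z)⁻¹
      = -6 * z * Li4 (-z * Real.exp a) := by
  have hz2 : z * z = 1 := by rcases hz with h | h <;> simp [h]
  have hzabs : |z| = 1 := by rcases hz with h | h <;> simp [h]
  set F : ℕ → ℝ → ℝ := fun n q =>
    (-z) ^ n * Real.exp ((n + 1) * a) * (q ^ 3 * Real.exp (-((n + 1) * q))) with hF
  have hc : ∀ n : ℕ, (0:ℝ) < (n : ℝ) + 1 := fun n => by positivity
  have hint : ∀ n : ℕ, Integrable (F n) (volume.restrict (Set.Ioi 0)) := fun n =>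
    ((key_integrable (hc n)).const_mul _)
  have hval : ∀ n : ℕ, ∫ q in Set.Ioi (0:ℝ), F n q
      = (-z) ^ n * Real.exp ((n + 1) * a) * (6 / ((n:ℝ) + 1) ^ 4) := by
    intro n
    rw [hF]
    simp only [integral_const_mul]
    rw [key_integral (hc n)]
  -- summability of norms
  have hnorm : ∀ n : ℕ, (∫ q in Set.Ioi (0:ℝ), ‖F n q‖)
      = Real.exp ((n + 1) * a) * (6 / ((n:ℝ) + 1) ^ 4) := by
    intro n
    have : ∀ q ∈ Set.Ioi (0:ℝ), ‖F n q‖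
        = Real.exp ((n + 1) * a) * (q ^ 3 * Real.exp (-((n + 1) * q))) := by
      intro q hq
      have hq0 : (0:ℝ) < q := hq
      rw [hF, Real.norm_eq_abs, abs_mul, abs_mul, abs_pow, abs_neg, hzabs, one_pow, one_mul,
        abs_of_nonneg (Real.exp_pos _).le,
        abs_of_nonneg (by positivity : (0:ℝ) ≤ q ^ 3 * Real.exp (-((n + 1) * q)))]
    rw [setIntegral_congr_fun measurableSet_Ioi this, integral_const_mul, key_integral (hc n)]
  have hsum : Summable fun n : ℕ => ∫ q in Set.Ioi (0:ℝ), ‖F n q‖ := by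
    simp only [hnorm]
    have hg : Summable fun n : ℕ => 6 / ((n:ℝ) + 1) ^ 4 := by
      have h0 : Summable fun n : ℕ => 1 / ((n:ℝ) + 1) ^ 4 := by
        have h1 := Real.summable_one_div_nat_pow.mpr (show 1 < 4 by norm_num)
        have h2 := (summable_nat_add_iff 1).mpr h1
        refine h2.congr fun n => ?_
        push_cast
        ring
      exact (h0.mul_left 6).congr fun n => by ring
    refine Summable.of_nonneg_of_le (fun n => by positivity) (fun n => ?_) hg
    have h1 : Real.exp (((n:ℝ) + 1) * a) ≤ 1 := by
      rw [Real.exp_le_one_iff]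
      have : (0:ℝ) ≤ (n:ℝ) + 1 := by positivity
      nlinarith
    have h2 : (0:ℝ) ≤ 6 / ((n:ℝ) + 1) ^ 4 := by positivity
    nlinarith
  -- pointwise series
  have hpt : ∀ q ∈ Set.Ioi (0:ℝ), ∑' n, F n q = q ^ 3 * (Real.exp (q - a) + z)⁻¹ := by
    intro q hq
    have hq0 : (0:ℝ) < q := hq
    set r : ℝ := -z * Real.exp (a - q) with hr
    have hrn : ‖r‖ < 1 := by
      rw [hr, norm_mul, norm_neg, Real.norm_eq_abs, Real.norm_eq_abs, hzabs, one_mul,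
        abs_of_nonneg (Real.exp_pos _).le]
      exact Real.exp_lt_one_iff.2 (by linarith)
    have hgeo : ∑' n : ℕ, r ^ n = (1 - r)⁻¹ := tsum_geometric_of_norm_lt_one hrn
    have hFe : ∀ n : ℕ, F n q = (q ^ 3 * Real.exp (a - q)) * r ^ n := by
      intro n
      rw [hF, hr]
      have hrw : (-z * Real.exp (a - q)) ^ n = (-z) ^ n * Real.exp ((n:ℝ) * (a - q)) := by
        rw [mul_pow, ← Real.exp_nat_mul]
      have key : Real.exp (((n:ℝ) + 1) * a) * Real.exp (-(((n:ℝ) + 1) * q))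
          = Real.exp (a - q) * Real.exp ((n:ℝ) * (a - q)) := by
        rw [← Real.exp_add, ← Real.exp_add]
        congr 1
        ring
      rw [hrw]
      linear_combination ((-z) ^ n * q ^ 3) * key
    rw [tsum_congr hFe, tsum_mul_left, hgeo]
    have hd1 : (0:ℝ) < Real.exp (q - a) + z := by
      have : (1:ℝ) < Real.exp (q - a) := by
        rw [show (1:ℝ) = Real.exp 0 by simp]
        exact Real.exp_lt_exp.2 (by linarith)
      rcases hz with h | h <;> rw [h] <;> linarith
    have hd2 : 1 - r = Real.exp (a - q) * (Real.exp (q - a) + z) := by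
      rw [hr, mul_add, ← Real.exp_add]
      ring_nf
      rw [Real.exp_zero]
      ring
    rw [hd2, mul_inv, ← mul_assoc]
    rw [mul_assoc (q^3), mul_inv_cancel₀ (Real.exp_pos _).ne']
    ring
  -- combine
  rw [← setIntegral_congr_fun measurableSet_Ioi hpt,
    ← integral_tsum_of_summable_integral_norm hint hsum]
  rw [tsum_congr hval]
  rw [Li4, ← tsum_mul_left]
  apply tsum_congr
  intro n
  have hcast : (-z * Real.exp a) ^ (n + 1) = (-z) ^ (n + 1) * Real.exp (((n:ℝ) + 1) * a) := by
    rw [mul_pow, ← Real.exp_nat_mul]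
    norm_num
  rw [hcast, pow_succ]
  linear_combination (-6 * (-z) ^ n * Real.exp (((n:ℝ) + 1) * a) / ((n:ℝ) + 1) ^ 4) * hz2
end
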